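/- Let p ≥ 2 and K > 0, let B be a real Banach space with modulus of uniform convexity η(ε) = K ε^p, let T be a nonexpansive linear operator on B, let x ∈ B with x ≠ 0, and let ε > 0 with ε < 2‖x‖. Set M = ⌈16‖x‖/ε⌉ and γ = (ε/8) · K · (ε/(8‖x‖))^{p−1}. Then the sequence of ergodic averages (A_n x)_{n≥1} admits at most ⌊4 (log M) ‖x‖/ε⌋ + ⌊‖x‖/γ⌋ · ⌊4 (log 2M) ‖x‖/ε⌋ + ⌊‖x‖/γ⌋ many ε-fluctuations, where log is the natural logarithm. -/

import Mathlib

/-!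
An `ε`-fluctuation `(i, j)` of the averages forces `i ≤ (1 - ε / (2‖x‖)) j`, so the indices grow
geometrically. Along the fluctuations we keep a vector `w`, with `‖w‖ ≤ ‖x‖ - t γ` after `t`
drops, whose averages `A_m w` stay within `n ‖x‖ / m` of those of `x` (`Shadows`). Once a
fluctuation starts at `i ≥ 8 ‖x‖ n / ε`, the averages `A_i w` and `A_j w` inherit an
`ε / 8`-separation from `A_i x` and `A_j x`, and uniform convexity lets us replace `w` by their
midpoint, losing `γ` in norm while `n` only grows to `n + j` (averages of averages are
approximate fixed points). Such drops happen at most `‖x‖ / γ` times, and between two of them the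
geometric growth of the indices allows at most `⌊4 (log M) ‖x‖ / ε⌋` fluctuations.
-/

open Finset

/-- The ergodic averages `A n x = (1/n) ∑_{i<n} Tⁱ x`. -/
noncomputable def ergAvg {B : Type*} [NormedAddCommGroup B] [Module ℝ B]
    (T : B →ₗ[ℝ] B) (n : ℕ) (x : B) : B :=
  (n : ℝ)⁻¹ • ∑ i ∈ Finset.range n, (T ^ i) x

/-- The sequence `(a n)_{n ≥ 1}` admits `k` `ε`-fluctuations: there are indices
`1 ≤ i₁ ≤ j₁ ≤ i₂ ≤ j₂ ≤ … ≤ i_k ≤ j_k` with `‖a (j u) - a (i u)‖ ≥ ε` for each `u`. -/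
def AdmitsFluctuations {B : Type*} [NormedAddCommGroup B] (a : ℕ → B) (ε : ℝ) (k : ℕ) : Prop :=
  ∃ i j : ℕ → ℕ,
    (∀ u < k, 1 ≤ i u ∧ i u ≤ j u ∧ ε ≤ ‖a (j u) - a (i u)‖) ∧
    (∀ u, u + 1 < k → j u ≤ i (u + 1))

section Averages

variable {B : Type*} [NormedAddCommGroup B] [Module ℝ B] (T : B →ₗ[ℝ] B)

lemma ergAvg_eq_apply (n : ℕ) (x : B) :
    ergAvg T n x = ((n : ℝ)⁻¹ • ∑ i ∈ range n, T ^ i) x := by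
  simp [ergAvg, LinearMap.sum_apply]

lemma ergAvg_add (n : ℕ) (x y : B) : ergAvg T n (x + y) = ergAvg T n x + ergAvg T n y := by
  simp only [ergAvg_eq_apply, map_add]

lemma ergAvg_sub (n : ℕ) (x y : B) : ergAvg T n (x - y) = ergAvg T n x - ergAvg T n y := by
  simp only [ergAvg_eq_apply, map_sub]

lemma ergAvg_smul (n : ℕ) (c : ℝ) (x : B) : ergAvg T n (c • x) = c • ergAvg T n x := by
  simp only [ergAvg_eq_apply, map_smul]

lemma ergAvg_ergAvg_comm (n m : ℕ) (x : B) :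
    ergAvg T n (ergAvg T m x) = ergAvg T m (ergAvg T n x) := by
  have h : Commute ((n : ℝ)⁻¹ • ∑ i ∈ range n, T ^ i) ((m : ℝ)⁻¹ • ∑ i ∈ range m, T ^ i) :=
    ((Commute.sum_right _ _ _ fun b _ => Commute.sum_left _ _ _ fun a _ =>
      Commute.pow_pow_self T a b).smul_left _).smul_right _
  simp only [ergAvg_eq_apply, ← Module.End.mul_apply, h.eq]

end Averages

section Nonexpansive

variable {B : Type*} [NormedAddCommGroup B] [NormedSpace ℝ B] {T : B →ₗ[ℝ] B}

lemma norm_pow_apply_le (hT : ∀ y : B, ‖T y‖ ≤ ‖y‖) (k : ℕ) (y : B) : ‖(T ^ k) y‖ ≤ ‖y‖ := by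
  induction k generalizing y with
  | zero => simp
  | succ k ih => rw [pow_succ, Module.End.mul_apply]; exact (ih (T y)).trans (hT y)

lemma norm_sum_pow_apply_le (hT : ∀ y : B, ‖T y‖ ≤ ‖y‖) (s : Finset ℕ) (y : B) :
    ‖∑ r ∈ s, (T ^ r) y‖ ≤ #s * ‖y‖ :=
  (norm_sum_le _ _).trans <|
    (sum_le_card_nsmul _ _ _ fun r _ => norm_pow_apply_le hT r y).trans_eq (nsmul_eq_mul _ _)

lemma norm_ergAvg_le (hT : ∀ y : B, ‖T y‖ ≤ ‖y‖) (n : ℕ) (y : B) : ‖ergAvg T n y‖ ≤ ‖y‖ := by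
  rcases n.eq_zero_or_pos with rfl | hn
  · simp [ergAvg]
  rw [ergAvg, norm_smul, norm_inv, Real.norm_natCast, inv_mul_le_iff₀ (by positivity)]
  simpa using norm_sum_pow_apply_le hT (range n) y

lemma norm_ergAvg_sub_ergAvg_le (hT : ∀ y : B, ‖T y‖ ≤ ‖y‖) {i j : ℕ} (hi : 0 < i) (hij : i ≤ j)
    (x : B) : ‖ergAvg T j x - ergAvg T i x‖ ≤ 2 * ‖x‖ * (j - i) / j := by
  have hi' : (0 : ℝ) < i := by exact_mod_cast hi
  have hj : (0 : ℝ) < j := by exact_mod_cast hi.trans_le hij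
  have hsplit : ergAvg T j x - ergAvg T i x
      = (j : ℝ)⁻¹ • (∑ r ∈ Ico i j, (T ^ r) x - ((j : ℝ) - i) • ergAvg T i x) := by
    rw [ergAvg, ergAvg, ← sum_range_add_sum_Ico _ hij]
    match_scalars <;> field_simp
    ring
  have hIco : ‖∑ r ∈ Ico i j, (T ^ r) x‖ ≤ ((j : ℝ) - i) * ‖x‖ := by
    simpa [Nat.cast_sub hij] using norm_sum_pow_apply_le hT (Ico i j) x
  have hAi : ‖((j : ℝ) - i) • ergAvg T i x‖ ≤ ((j : ℝ) - i) * ‖x‖ := by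
    have hji : (0 : ℝ) ≤ j - i := by simpa using hij
    rw [norm_smul, Real.norm_of_nonneg hji]
    exact mul_le_mul_of_nonneg_left (norm_ergAvg_le hT i x) hji
  rw [hsplit, norm_smul, norm_inv, Real.norm_natCast, inv_mul_le_iff₀ hj]
  calc _ ≤ ((j : ℝ) - i) * ‖x‖ + ((j : ℝ) - i) * ‖x‖ :=
        (norm_sub_le _ _).trans (add_le_add hIco hAi)
    _ = _ := by field_simp; ring

lemma norm_pow_apply_sub_le (hT : ∀ y : B, ‖T y‖ ≤ ‖y‖) (k : ℕ) (y : B) :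
    ‖(T ^ k) y - y‖ ≤ k * ‖T y - y‖ := by
  induction k with
  | zero => simp
  | succ k ih =>
    have h : (T ^ (k + 1)) y - y = (T ^ k) (T y - y) + ((T ^ k) y - y) := by
      rw [map_sub, pow_succ, Module.End.mul_apply]; abel
    calc ‖(T ^ (k + 1)) y - y‖ ≤ ‖T y - y‖ + k * ‖T y - y‖ :=
          h ▸ (norm_add_le _ _).trans (add_le_add (norm_pow_apply_le hT k _) ih)
      _ = (k + 1 : ℕ) * ‖T y - y‖ := by push_cast; ring

lemma norm_ergAvg_sub_le (hT : ∀ y : B, ‖T y‖ ≤ ‖y‖) {n : ℕ} (hn : 0 < n) (y : B) :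
    ‖ergAvg T n y - y‖ ≤ n * ‖T y - y‖ / 2 := by
  have hn' : (0 : ℝ) < n := by exact_mod_cast hn
  have hsum : ergAvg T n y - y = (n : ℝ)⁻¹ • ∑ k ∈ range n, ((T ^ k) y - y) := by
    rw [sum_sub_distrib, smul_sub, ergAvg, sum_const, card_range, ← Nat.cast_smul_eq_nsmul ℝ,
      smul_smul, inv_mul_cancel₀ hn'.ne', one_smul]
  have hgauss : (∑ k ∈ range n, (k : ℝ)) * 2 ≤ (n : ℝ) * n := by
    have h : (∑ k ∈ range n, k) * 2 ≤ n * n := by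
      rw [sum_range_id_mul_two]; exact Nat.mul_le_mul_left n (Nat.sub_le n 1)
    rw [← Nat.cast_sum]; exact_mod_cast h
  have hbound : ‖∑ k ∈ range n, ((T ^ k) y - y)‖ ≤ (∑ k ∈ range n, (k : ℝ)) * ‖T y - y‖ :=
    (norm_sum_le _ _).trans <| (sum_le_sum fun k _ => norm_pow_apply_sub_le hT k y).trans_eq
      (sum_mul _ _ _).symm
  rw [hsum, norm_smul, norm_inv, Real.norm_natCast, inv_mul_le_iff₀ hn']
  nlinarith [norm_nonneg (T y - y)]

lemma norm_apply_ergAvg_sub_le (hT : ∀ y : B, ‖T y‖ ≤ ‖y‖) {m : ℕ} (hm : 0 < m) (y : B) :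
    ‖T (ergAvg T m y) - ergAvg T m y‖ ≤ 2 * ‖y‖ / m := by
  have hm' : (0 : ℝ) < m := by exact_mod_cast hm
  have htelescope : T (ergAvg T m y) - ergAvg T m y = (m : ℝ)⁻¹ • ((T ^ m) y - y) := by
    have h := sum_range_sub (fun k => (T ^ k) y) m
    simp only [pow_succ', Module.End.mul_apply, pow_zero, Module.End.one_apply] at h
    rw [ergAvg, map_smul, map_sum, ← smul_sub, ← sum_sub_distrib, h]
  rw [htelescope, norm_smul, norm_inv, Real.norm_natCast, inv_mul_le_iff₀ hm',
    mul_div_cancel₀ _ hm'.ne']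
  calc ‖(T ^ m) y - y‖ ≤ ‖y‖ + ‖y‖ :=
        (norm_sub_le _ _).trans (add_le_add (norm_pow_apply_le hT m y) le_rfl)
    _ = 2 * ‖y‖ := by ring

lemma norm_ergAvg_ergAvg_sub_le (hT : ∀ y : B, ‖T y‖ ≤ ‖y‖) {l m : ℕ} (hl : 0 < l) (hm : 0 < m)
    (y : B) : ‖ergAvg T l (ergAvg T m y) - ergAvg T m y‖ ≤ l * ‖y‖ / m := by
  calc _ ≤ l * ‖T (ergAvg T m y) - ergAvg T m y‖ / 2 := norm_ergAvg_sub_le hT hl _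
    _ ≤ l * (2 * ‖y‖ / m) / 2 := by gcongr; exact norm_apply_ergAvg_sub_le hT hm y
    _ = l * ‖y‖ / m := by ring

lemma le_one_sub_mul_of_le_norm_ergAvg_sub (hT : ∀ y : B, ‖T y‖ ≤ ‖y‖) {x : B} {i j : ℕ}
    (hi : 0 < i) (hij : i ≤ j) {ε : ℝ} (hfl : ε ≤ ‖ergAvg T j x - ergAvg T i x‖) :
    (i : ℝ) ≤ (1 - ε / (2 * ‖x‖)) * j := by
  rcases eq_or_ne x 0 with rfl | hx
  · simpa using hij
  have hX : 0 < ‖x‖ := norm_pos_iff.mpr hx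
  have hj : (0 : ℝ) < j := by exact_mod_cast hi.trans_le hij
  have h := hfl.trans (norm_ergAvg_sub_ergAvg_le hT hi hij x)
  rw [le_div_iff₀ hj] at h
  have : ε / (2 * ‖x‖) * j ≤ j - i := by
    rw [div_mul_eq_mul_div, div_le_iff₀ (by positivity)]; linarith
  linarith

end Nonexpansive

def HasPowerModulusOfConvexity (B : Type*) [NormedAddCommGroup B] [NormedSpace ℝ B] (K p : ℝ) :
    Prop :=
  ∀ ε ∈ Set.Ioc (0 : ℝ) 2, ∀ x y : B, ‖x‖ ≤ 1 → ‖y‖ ≤ 1 → ε ≤ ‖x - y‖ →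
    ‖(1 / 2 : ℝ) • (x + y)‖ ≤ 1 - K * ε ^ p

lemma HasPowerModulusOfConvexity.norm_midpoint_le {B : Type*} [NormedAddCommGroup B]
    [NormedSpace ℝ B] {K p : ℝ} (huc : HasPowerModulusOfConvexity B K p) {u v : B} {b δ : ℝ}
    (hu : ‖u‖ ≤ b) (hv : ‖v‖ ≤ b) (hδ : 0 < δ) (huv : δ ≤ ‖u - v‖) :
    ‖(1 / 2 : ℝ) • (u + v)‖ ≤ b - K * δ ^ p / b ^ (p - 1) := by
  have hb : 0 < b := by linarith [norm_sub_le u v]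
  have hscale (y : B) : ‖b⁻¹ • y‖ = b⁻¹ * ‖y‖ := by
    rw [norm_smul, Real.norm_of_nonneg (inv_nonneg.mpr hb.le)]
  have h := huc (δ / b) ⟨div_pos hδ hb, (div_le_iff₀ hb).mpr (by linarith [norm_sub_le u v])⟩
    (b⁻¹ • u) (b⁻¹ • v) (by rw [hscale, inv_mul_le_one₀ hb]; exact hu)
    (by rw [hscale, inv_mul_le_one₀ hb]; exact hv)
    (by rw [← smul_sub, hscale, div_eq_inv_mul]; gcongr)
  rw [← smul_add, smul_comm, hscale, inv_mul_le_iff₀ hb] at h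
  calc _ ≤ b * (1 - K * (δ / b) ^ p) := h
    _ = b - K * δ ^ p / b ^ (p - 1) := by
      rw [Real.div_rpow hδ.le hb.le, Real.rpow_sub_one hb.ne']; field_simp

section Shadows

variable {B : Type*} [NormedAddCommGroup B] [NormedSpace ℝ B] {T : B →ₗ[ℝ] B}

def Shadows (T : B →ₗ[ℝ] B) (x w : B) (n : ℕ) : Prop :=
  ∀ m : ℕ, 0 < m → ‖ergAvg T m x - ergAvg T m w‖ ≤ n * ‖x‖ / m

lemma shadows_self (x : B) (n : ℕ) : Shadows T x x n :=
  fun m _ => by rw [sub_self, norm_zero]; positivity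

lemma Shadows.norm_ergAvg_sub_ergAvg_ergAvg_le (hT : ∀ y : B, ‖T y‖ ≤ ‖y‖) {x w : B} {n : ℕ}
    (h : Shadows T x w n) {l m : ℕ} (hl : 0 < l) (hm : 0 < m) :
    ‖ergAvg T m x - ergAvg T l (ergAvg T m w)‖ ≤ (n + l) * ‖x‖ / m :=
  calc _ ≤ ‖ergAvg T m x - ergAvg T l (ergAvg T m x)‖
        + ‖ergAvg T l (ergAvg T m x) - ergAvg T l (ergAvg T m w)‖ :=
          norm_sub_le_norm_sub_add_norm_sub _ _ _
    _ ≤ l * ‖x‖ / m + n * ‖x‖ / m := by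
      rw [norm_sub_rev, ← ergAvg_sub]
      exact add_le_add (norm_ergAvg_ergAvg_sub_le hT hl hm x)
        ((norm_ergAvg_le hT l _).trans (h m hm))
    _ = (n + l) * ‖x‖ / m := by ring

lemma Shadows.midpoint (hT : ∀ y : B, ‖T y‖ ≤ ‖y‖) {x w : B} {n i j : ℕ} (h : Shadows T x w n)
    (hi : 0 < i) (hij : i ≤ j) :
    Shadows T x ((1 / 2 : ℝ) • (ergAvg T i w + ergAvg T j w)) (n + j) := by
  intro m hm
  have hmid : ergAvg T m x - ergAvg T m ((1 / 2 : ℝ) • (ergAvg T i w + ergAvg T j w))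
      = (1 / 2 : ℝ) • ((ergAvg T m x - ergAvg T i (ergAvg T m w))
        + (ergAvg T m x - ergAvg T j (ergAvg T m w))) := by
    rw [ergAvg_smul, ergAvg_add, ergAvg_ergAvg_comm T m i, ergAvg_ergAvg_comm T m j]
    module
  have hi' : ‖ergAvg T m x - ergAvg T i (ergAvg T m w)‖ ≤ (n + j) * ‖x‖ / m :=
    (h.norm_ergAvg_sub_ergAvg_ergAvg_le hT hi hm).trans (by gcongr)
  have hj' := h.norm_ergAvg_sub_ergAvg_ergAvg_le hT (hi.trans_le hij) hm
  rw [hmid, norm_smul, Real.norm_of_nonneg (by norm_num)]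
  push_cast
  linarith [norm_add_le (ergAvg T m x - ergAvg T i (ergAvg T m w))
    (ergAvg T m x - ergAvg T j (ergAvg T m w))]

lemma Shadows.norm_midpoint_le {K p : ℝ} (huc : HasPowerModulusOfConvexity B K p) (hK : 0 ≤ K)
    (hp : 1 ≤ p) (hT : ∀ y : B, ‖T y‖ ≤ ‖y‖) {x w : B} {n i j : ℕ} {b ε : ℝ}
    (h : Shadows T x w n) (hw : ‖w‖ ≤ b) (hb : b ≤ ‖x‖) (hi : 0 < i) (hij : i ≤ j) (hε : 0 < ε)
    (hfl : ε ≤ ‖ergAvg T j x - ergAvg T i x‖) (htrig : 8 * ‖x‖ * n ≤ ε * i) :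
    ‖(1 / 2 : ℝ) • (ergAvg T i w + ergAvg T j w)‖ ≤ b - K * (ε / 8) ^ p / ‖x‖ ^ (p - 1) := by
  have hi' : (0 : ℝ) < i := by exact_mod_cast hi
  have hij' : (i : ℝ) ≤ j := by exact_mod_cast hij
  have hclose_i : ‖ergAvg T i x - ergAvg T i w‖ ≤ ε / 8 :=
    (h i hi).trans (by rw [div_le_iff₀ hi']; linarith)
  have hclose_j : ‖ergAvg T j x - ergAvg T j w‖ ≤ ε / 8 :=
    (h j (hi.trans_le hij)).trans <| (div_le_div_of_nonneg_left (by positivity) hi' hij').trans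
      (by rw [div_le_iff₀ hi']; linarith)
  have hsep : ε / 8 ≤ ‖ergAvg T i w - ergAvg T j w‖ := by
    have := norm_sub_le_norm_sub_add_norm_sub (ergAvg T j x) (ergAvg T j w) (ergAvg T i x)
    have := norm_sub_le_norm_sub_add_norm_sub (ergAvg T j w) (ergAvg T i w) (ergAvg T i x)
    rw [norm_sub_rev (ergAvg T j w), norm_sub_rev (ergAvg T i w)] at *
    linarith
  have hui := (norm_ergAvg_le hT i w).trans hw
  have huj := (norm_ergAvg_le hT j w).trans hw
  have hb0 : 0 < b := by linarith [norm_sub_le (ergAvg T i w) (ergAvg T j w)]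
  calc _ ≤ b - K * (ε / 8) ^ p / b ^ (p - 1) := huc.norm_midpoint_le hui huj (by positivity) hsep
    _ ≤ b - K * (ε / 8) ^ p / ‖x‖ ^ (p - 1) := by gcongr

end Shadows

/-- In the application `P t n` says that a vector reached after `t` drops shadows `x` with
parameter `n`. A step `u` with `n ≤ c i_u` is a drop; between drops `n ≤ 2 i_u (1 - q) ^ r`,
`r` being the number of steps since the last drop, so `hN` bounds `r`. -/
theorem le_mul_add_of_drops {i j : ℕ → ℕ} {k N D : ℕ} {q c : ℝ} (P : ℕ → ℕ → Prop)
    (hij : ∀ u < k, (i u : ℝ) ≤ (1 - q) * j u) (hji : ∀ u, u + 1 < k → j u ≤ i (u + 1))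
    (hq₀ : 0 ≤ q) (hq₁ : q ≤ 1) (hc : c ≤ 1) (hN : ∀ r : ℕ, c < 2 * (1 - q) ^ r → r + 1 ≤ N)
    (h₀ : P 0 0) (hstep : ∀ t n u, u < k → P t n → (n : ℝ) ≤ c * i u → P (t + 1) (n + j u))
    (hD : ∀ t n, P t n → t ≤ D) :
    k ≤ D * (N + 1) + N := by
  have key : ∀ u ≤ k, ∃ t n r, P t n ∧ r ≤ N ∧ u ≤ t * (N + 1) + r ∧
      (u < k → (n : ℝ) ≤ 2 * i u * (1 - q) ^ r) := by
    intro u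
    induction u with
    | zero => exact fun _ => ⟨0, 0, 0, h₀, Nat.zero_le _, Nat.zero_le _, fun _ => by simp⟩
    | succ u ih =>
      intro hu
      obtain ⟨t, n, r, hP, hrN, hut, hn⟩ := ih (by omega)
      have hn := hn hu
      have hiju := hij u hu
      have hnext (hu' : u + 1 < k) : (j u : ℝ) ≤ i (u + 1) := by exact_mod_cast hji u hu'
      by_cases htrig : (n : ℝ) ≤ c * i u
      · refine ⟨t + 1, n + j u, 0, hstep t n u hu hP htrig, Nat.zero_le _, by nlinarith,
          fun hu' => ?_⟩
        have := hnext hu'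
        push_cast
        nlinarith
      · have hcr : c < 2 * (1 - q) ^ r := by nlinarith
        refine ⟨t, n, r + 1, hP, hN r hcr, by omega, fun hu' => ?_⟩
        have := hnext hu'
        have : (0 : ℝ) ≤ (1 - q) ^ r := pow_nonneg (by linarith) r
        calc (n : ℝ) ≤ 2 * i u * (1 - q) ^ r := hn
          _ ≤ 2 * ((1 - q) * j u) * (1 - q) ^ r := by gcongr
          _ = 2 * j u * (1 - q) ^ (r + 1) := by ring
          _ ≤ 2 * i (u + 1) * (1 - q) ^ (r + 1) := by gcongr
  obtain ⟨t, n, r, hP, hrN, hk, -⟩ := key k le_rfl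
  calc k ≤ t * (N + 1) + r := hk
    _ ≤ D * (N + 1) + N := by gcongr; exact hD t n hP

lemma succ_le_floor_log_of_lt_pow {X ε : ℝ} (hε : 0 < ε) (hεX : ε < 2 * X) {r : ℕ}
    (hr : ε / (8 * X) < 2 * (1 - ε / (2 * X)) ^ r) :
    r + 1 ≤ ⌊4 * Real.log ⌈16 * X / ε⌉₊ * X / ε⌋₊ := by
  have hX : 0 < X := by linarith
  have hq : ε / (2 * X) < 1 := by rw [div_lt_one (by positivity)]; exact hεX
  set M : ℕ := ⌈16 * X / ε⌉₊
  have hM : 16 * X / ε ≤ M := Nat.le_ceil _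
  have hM8 : 8 < (M : ℝ) := lt_of_lt_of_le ((lt_div_iff₀ hε).mpr (by linarith)) hM
  have hlogM : 1 ≤ Real.log M := by
    rw [Real.le_log_iff_exp_le (by linarith)]; linarith [Real.exp_one_lt_d9]
  have hpow : (1 - ε / (2 * X)) ^ r ≤ Real.exp (-(r * (ε / (2 * X)))) := by
    rw [← mul_neg, Real.exp_nat_mul]
    exact pow_le_pow_left₀ (by linarith) (Real.one_sub_le_exp_neg _) r
  have hrq : r * (ε / (2 * X)) < Real.log M := by
    have h := Real.log_lt_log (by positivity)
      (show ε / (16 * X) < Real.exp (-(r * (ε / (2 * X)))) by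
        calc ε / (16 * X) = ε / (8 * X) / 2 := by ring
          _ < _ := by linarith)
    rw [Real.log_exp, ← inv_div, Real.log_inv] at h
    calc r * (ε / (2 * X)) < Real.log (16 * X / ε) := by linarith
      _ ≤ Real.log M := Real.log_le_log (by positivity) hM
  rw [mul_div_assoc', div_lt_iff₀ (by positivity)] at hrq
  refine Nat.le_floor ((le_div_iff₀ hε).mpr ?_)
  push_cast
  nlinarith

lemma mul_mul_div_rpow_sub_one {a X : ℝ} (ha : 0 < a) (hX : 0 < X) (K p : ℝ) :
    a * (K * (a / X) ^ (p - 1)) = K * a ^ p / X ^ (p - 1) := by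
  rw [Real.div_rpow ha.le hX.le, Real.rpow_sub_one ha.ne']
  field_simp

theorem stmt14_general (p K : ℝ) (hp : 2 ≤ p) (hK : 0 < K)
    {B : Type*} [NormedAddCommGroup B] [NormedSpace ℝ B]
    (huc : ∀ ε ∈ Set.Ioc (0 : ℝ) 2, ∀ x y : B, ‖x‖ ≤ 1 → ‖y‖ ≤ 1 → ε ≤ ‖x - y‖ →
      ‖(1 / 2 : ℝ) • (x + y)‖ ≤ 1 - K * ε ^ p)
    (T : B →ₗ[ℝ] B) (hT : ∀ y : B, ‖T y‖ ≤ ‖y‖)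
    (x : B) (hx : x ≠ 0) (ε : ℝ) (hε : 0 < ε) (hε2 : ε < 2 * ‖x‖) :
    ∀ k : ℕ, AdmitsFluctuations (fun n => ergAvg T n x) ε k →
      k ≤ ⌊4 * Real.log (⌈16 * ‖x‖ / ε⌉₊ : ℝ) * ‖x‖ / ε⌋₊
          + ⌊‖x‖ / (ε / 8 * (K * (ε / (8 * ‖x‖)) ^ (p - 1)))⌋₊
            * ⌊4 * Real.log (2 * (⌈16 * ‖x‖ / ε⌉₊ : ℝ)) * ‖x‖ / ε⌋₊
          + ⌊‖x‖ / (ε / 8 * (K * (ε / (8 * ‖x‖)) ^ (p - 1)))⌋₊ := by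
  rintro k ⟨i, j, hfl, hji⟩
  have hX : 0 < ‖x‖ := norm_pos_iff.mpr hx
  have hγ : ε / 8 * (K * (ε / (8 * ‖x‖)) ^ (p - 1)) = K * (ε / 8) ^ p / ‖x‖ ^ (p - 1) := by
    rw [← div_div]; exact mul_mul_div_rpow_sub_one (by positivity) hX K p
  set γ := ε / 8 * (K * (ε / (8 * ‖x‖)) ^ (p - 1))
  have hγ₀ : 0 < γ := by positivity
  have hstep (t n u : ℕ) (hu : u < k) :
      (∃ w, ‖w‖ ≤ ‖x‖ - t * γ ∧ Shadows T x w n) → (n : ℝ) ≤ ε / (8 * ‖x‖) * i u →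
      ∃ w, ‖w‖ ≤ ‖x‖ - ↑(t + 1) * γ ∧ Shadows T x w (n + j u) := by
    rintro ⟨w, hw, hsh⟩ htrig
    obtain ⟨hi, hij, hflu⟩ := hfl u hu
    refine ⟨_, ?_, hsh.midpoint hT hi hij⟩
    have := hsh.norm_midpoint_le huc hK.le (by linarith) hT hw (by nlinarith) hi hij hε hflu
      (by rw [div_mul_eq_mul_div, le_div_iff₀ (by positivity)] at htrig; linarith)
    push_cast
    linarith
  have hk := le_mul_add_of_drops (D := ⌊‖x‖ / γ⌋₊)
    (fun t n => ∃ w, ‖w‖ ≤ ‖x‖ - t * γ ∧ Shadows T x w n)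
    (fun u hu => le_one_sub_mul_of_le_norm_ergAvg_sub hT (hfl u hu).1 (hfl u hu).2.1
      (hfl u hu).2.2)
    hji (by positivity) (by rw [div_le_one (by positivity)]; linarith)
    (by rw [div_le_one (by positivity)]; linarith)
    (fun r hr => succ_le_floor_log_of_lt_pow hε hε2 hr) ⟨x, by simp, shadows_self x 0⟩ hstep
    (fun t n ⟨w, hw, _⟩ => Nat.le_floor ((le_div_iff₀ hγ₀).mpr (by linarith [norm_nonneg w])))
  have hlog : ⌊4 * Real.log (⌈16 * ‖x‖ / ε⌉₊ : ℝ) * ‖x‖ / ε⌋₊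
      ≤ ⌊4 * Real.log (2 * (⌈16 * ‖x‖ / ε⌉₊ : ℝ)) * ‖x‖ / ε⌋₊ := by
    have : 0 < (⌈16 * ‖x‖ / ε⌉₊ : ℝ) := by positivity
    gcongr
    linarith
  calc k ≤ _ := hk
    _ ≤ _ := by nlinarith

/-- With `M = ⌈16‖x‖/ε⌉` and `γ = (ε/8)·K·(ε/(8‖x‖))^{p-1}`, the sequence of ergodic averages of
a nonexpansive linear operator on a Banach space with modulus of uniform convexity
`η(ε) = K ε^p` admits at most
`⌊4 (log M) ‖x‖/ε⌋ + ⌊‖x‖/γ⌋·⌊4 (log 2M) ‖x‖/ε⌋ + ⌊‖x‖/γ⌋` many `ε`-fluctuations. -/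
theorem stmt14 (p K : ℝ) (hp : 2 ≤ p) (hK : 0 < K)
    {B : Type*} [NormedAddCommGroup B] [NormedSpace ℝ B] [CompleteSpace B]
    (huc : ∀ ε ∈ Set.Ioc (0 : ℝ) 2, ∀ x y : B, ‖x‖ ≤ 1 → ‖y‖ ≤ 1 → ε ≤ ‖x - y‖ →
      ‖(1 / 2 : ℝ) • (x + y)‖ ≤ 1 - K * ε ^ p)
    (T : B →ₗ[ℝ] B) (hT : ∀ y : B, ‖T y‖ ≤ ‖y‖)
    (x : B) (hx : x ≠ 0) (ε : ℝ) (hε : 0 < ε) (hε2 : ε < 2 * ‖x‖) :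
    ∀ k : ℕ, AdmitsFluctuations (fun n => ergAvg T n x) ε k →
      k ≤ ⌊4 * Real.log (⌈16 * ‖x‖ / ε⌉₊ : ℝ) * ‖x‖ / ε⌋₊
          + ⌊‖x‖ / (ε / 8 * (K * (ε / (8 * ‖x‖)) ^ (p - 1)))⌋₊
            * ⌊4 * Real.log (2 * (⌈16 * ‖x‖ / ε⌉₊ : ℝ)) * ‖x‖ / ε⌋₊
          + ⌊‖x‖ / (ε / 8 * (K * (ε / (8 * ‖x‖)) ^ (p - 1)))⌋₊ :=
  stmt14_general p K hp hK huc T hT x hx ε hε hε2
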